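/- The prolonged symbol σ₃(P₁) of the Rapcsák operator has rank (7n² − n)/2; precisely, the linear map σ₃(P₁) sending a symmetric trilinear form A on V to the pair of bilinear forms (B_S, B_C), where B_S(X,Y) := A(X, S, J Y) − A(X, Y, C) and B_C(X,Y) := A(X, Y, C), has image of dimension (7n² − n)/2. -/

import Mathlib

set_option synthInstance.maxHeartbeats 1000000
set_option maxHeartbeats 1000000

noncomputable section

/-- The pointwise model `V = (Fin n → ℝ) × (Fin n → ℝ)` of the double tangent space
`T_x(TM)` for a spray on an `n`-dimensional manifold, in an adapted basis. -/
abbrev V (n : ℕ) : Type := (Fin n → ℝ) × (Fin n → ℝ)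

/-- The vertical endomorphism `J (x, y) = (0, x)`. -/
def Jmap (n : ℕ) : V n →ₗ[ℝ] V n where
  toFun p := (0, p.1)
  map_add' a b := by simp
  map_smul' c a := by simp

/-- The horizontal projector `P_h (x, y) = (x, 0)`. -/
def Ph (n : ℕ) : V n →ₗ[ℝ] V n where
  toFun p := (p.1, 0)
  map_add' a b := by simp
  map_smul' c a := by simp

/-- The `j`-th standard basis vector of `Fin n → ℝ`, indexed by `1 ≤ j ≤ n`
(zero if `j` is out of range). -/
def dlt (n j : ℕ) : Fin n → ℝ := fun i => if (i : ℕ) + 1 = j then 1 else 0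

/-- The horizontal basis vector `h_j`, `1 ≤ j ≤ n`. -/
def hvec (n j : ℕ) : V n := (dlt n j, 0)

/-- The vertical basis vector `v_j`, `1 ≤ j ≤ n`. -/
def vvec (n j : ℕ) : V n := (0, dlt n j)

/-- The spray vector `S = h_n`. -/
def Svec (n : ℕ) : V n := hvec n n

/-- The Liouville vector `C = v_n = J S`. -/
def Cvec (n : ℕ) : V n := vvec n n

/-- Bilinear forms on `V n`. -/
abbrev Bil (n : ℕ) := V n →ₗ[ℝ] V n →ₗ[ℝ] ℝ

/-- Trilinear forms on `V n` (bundled). -/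
abbrev Tri (n : ℕ) := V n →ₗ[ℝ] V n →ₗ[ℝ] V n →ₗ[ℝ] ℝ

/-- The image of the prolonged symbol `σ₃(P₁)`: pairs `(B_S, B_C)` of bilinear forms
coming from a symmetric trilinear form `A` via `B_S(X,Y) = A(X, S, J Y) − A(X, Y, C)`
and `B_C(X,Y) = A(X, Y, C)`. -/
def sigma3P1Image (n : ℕ) : Submodule ℝ (Bil n × Bil n) where
  carrier := {B | ∃ A : Tri n,
    (∀ X Y Z, A X Y Z = A Y X Z) ∧ (∀ X Y Z, A X Y Z = A X Z Y) ∧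
    (∀ X Y, B.1 X Y = A X (Svec n) (Jmap n Y) - A X Y (Cvec n)) ∧
    (∀ X Y, B.2 X Y = A X Y (Cvec n))}
  add_mem' := by
    rintro a b ⟨A, hA1, hA2, hA3, hA4⟩ ⟨B, hB1, hB2, hB3, hB4⟩
    refine ⟨A + B, fun X Y Z => ?_, fun X Y Z => ?_, fun X Y => ?_, fun X Y => ?_⟩ <;>
      simp only [Prod.fst_add, Prod.snd_add, LinearMap.add_apply]
    · linear_combination hA1 X Y Z + hB1 X Y Z
    · linear_combination hA2 X Y Z + hB2 X Y Z
    · linear_combination hA3 X Y + hB3 X Y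
    · linear_combination hA4 X Y + hB4 X Y
  zero_mem' := ⟨0, fun X Y Z => by simp, fun X Y Z => by simp, fun X Y => by simp,
    fun X Y => by simp⟩
  smul_mem' := by
    rintro c a ⟨A, hA1, hA2, hA3, hA4⟩
    refine ⟨c • A, fun X Y Z => ?_, fun X Y Z => ?_, fun X Y => ?_, fun X Y => ?_⟩ <;>
      simp only [Prod.smul_fst, Prod.smul_snd, LinearMap.smul_apply, smul_eq_mul]
    · linear_combination c * hA1 X Y Z
    · linear_combination c * hA2 X Y Z
    · linear_combination c * hA3 X Y
    · linear_combination c * hA4 X Y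

/-! A symmetric trilinear form on `V n` is a function of the 3-element multisets of indices of the
adapted basis (`h_i ↦ .inl i`, `v_i ↦ .inr i`). The pair `σ₃(P₁) A` is determined by, and
determines, the values of `A` on the monomials `{X, Y, C}` and `{X, S, v_j}`. Hence the images of
the dual forms of these monomials are a basis of the image, and its dimension is their number:
`n (2n + 1)` monomials contain `C`, and the others are `{h_i, S, v_j}` with `j < n` and
`{v_i, S, v_j}` with `i, j < n`, of which there are `n (n - 1)` and `n (n - 1) / 2`. -/

theorem Multiset.pair_eq_pair_iff {α : Type*} {a b c d : α} :
    ({a, b} : Multiset α) = {c, d} ↔ a = c ∧ b = d ∨ a = d ∧ b = c := by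
  rw [← Sym2.eq_iff]
  refine ⟨fun h => ?_, fun h => congrArg Sym2.toMultiset h⟩
  rcases List.perm_pair.mp (Quotient.exact h) with h | h <;>
    simp_all [Sym2.eq_swap]

@[simp]
theorem Sym2.toMultiset_mk {α : Type*} (a b : α) : s(a, b).toMultiset = {a, b} := rfl

theorem Sym2.toMultiset_injective {α : Type*} :
    Function.Injective (Sym2.toMultiset (α := α)) := by
  intro z z' h
  induction z with | h a b => ?_
  induction z' with | h c d => ?_
  exact Sym2.eq_iff.mpr (Multiset.pair_eq_pair_iff.mp h)

def IsSymmTrilinear {R M N : Type*} [CommSemiring R] [AddCommMonoid M] [Module R M]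
    [AddCommMonoid N] [Module R N] (A : M →ₗ[R] M →ₗ[R] M →ₗ[R] N) : Prop :=
  (∀ X Y Z, A X Y Z = A Y X Z) ∧ ∀ X Y Z, A X Y Z = A X Z Y

theorem IsSymmTrilinear.apply_eq_of_multiset_eq {R M N : Type*} [CommSemiring R]
    [AddCommMonoid M] [Module R M] [AddCommMonoid N] [Module R N]
    {A : M →ₗ[R] M →ₗ[R] M →ₗ[R] N} (hA : IsSymmTrilinear A) {X Y Z X' Y' Z' : M}
    (h : ({X, Y, Z} : Multiset M) = {X', Y', Z'}) : A X Y Z = A X' Y' Z' := by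
  have rotate : ∀ W ∈ ({X, Y, Z} : Multiset M),
      ∃ P Q, ({X, Y, Z} : Multiset M) = {W, P, Q} ∧ A X Y Z = A W P Q := by
    simp only [Multiset.insert_eq_cons, Multiset.mem_cons, Multiset.mem_singleton]
    rintro W (rfl | rfl | rfl)
    · exact ⟨Y, Z, rfl, rfl⟩
    · exact ⟨X, Z, Multiset.cons_swap _ _ _, hA.1 _ _ _⟩
    · refine ⟨X, Y, ?_, by rw [hA.2, hA.1]⟩
      rw [← Multiset.cons_zero, ← Multiset.cons_zero, Multiset.cons_swap Y,
        Multiset.cons_swap X]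
  obtain ⟨P, Q, hPQ, hA'⟩ := rotate X' (h ▸ by simp)
  have hpair : ({P, Q} : Multiset M) = {Y', Z'} :=
    (Multiset.cons_inj_right X').mp (hPQ.symm.trans h)
  rcases Multiset.pair_eq_pair_iff.mp hpair with ⟨rfl, rfl⟩ | ⟨rfl, rfl⟩
  · exact hA'
  · rw [hA', hA.2]

namespace Module.Basis

variable {ι R M N : Type*} [CommSemiring R] [AddCommMonoid M] [Module R M]
    [AddCommMonoid N] [Module R N] (b : Basis ι R M)

theorem trilinear_ext {A A' : M →ₗ[R] M →ₗ[R] M →ₗ[R] N}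
    (h : ∀ x y z, A (b x) (b y) (b z) = A' (b x) (b y) (b z)) : A = A' :=
  b.ext fun x => LinearMap.ext_basis b b (h x)

variable [DecidableEq ι]

def symMonomialDual (s : Multiset ι) : M →ₗ[R] M →ₗ[R] M →ₗ[R] R :=
  b.constr R fun x => b.constr R fun y => b.constr R fun z => if {x, y, z} = s then 1 else 0

@[simp]
theorem symMonomialDual_apply_basis (s : Multiset ι) (x y z : ι) :
    b.symMonomialDual s (b x) (b y) (b z) = if {x, y, z} = s then 1 else 0 := by
  simp [symMonomialDual, constr_basis]

theorem isSymmTrilinear_symMonomialDual (s : Multiset ι) :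
    IsSymmTrilinear (b.symMonomialDual s) := by
  set A := b.symMonomialDual s
  have swap₁₂ : A.flip = A :=
    b.trilinear_ext fun x y z => by simp [A, Multiset.insert_eq_cons, Multiset.cons_swap]
  have swap₂₃ : LinearMap.lflip.toLinearMap ∘ₗ A = A :=
    b.trilinear_ext fun x y z => by
      simp [A, Multiset.insert_eq_cons, ← Multiset.cons_zero, Multiset.cons_swap]
  refine ⟨fun X Y Z => ?_, fun X Y Z => ?_⟩
  · conv_lhs => rw [← swap₁₂]
    rfl
  · conv_lhs => rw [← swap₂₃]
    rfl

theorem sum_smul_symMonomialDual_apply_basis {κ : Type*} [Fintype κ] {τ : κ → Multiset ι}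
    (hτ : Function.Injective τ) (g : κ → R) {x y z : ι} {k : κ} (h : {x, y, z} = τ k) :
    (∑ k, g k • b.symMonomialDual (τ k)) (b x) (b y) (b z) = g k := by
  simp only [LinearMap.sum_apply, LinearMap.smul_apply, symMonomialDual_apply_basis,
    smul_eq_mul, mul_ite, mul_one, mul_zero]
  rw [Finset.sum_eq_single k (fun k' _ hk' => if_neg (h ▸ hτ.ne hk'.symm)) (by simp), if_pos h]

end Module.Basis

def adaptedBasis (n : ℕ) : Module.Basis (Fin n ⊕ Fin n) ℝ (V n) :=
  (Pi.basisFun ℝ (Fin n)).prod (Pi.basisFun ℝ (Fin n))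

section AdaptedBasis

variable {n : ℕ}

theorem adaptedBasis_inl (i : Fin n) : adaptedBasis n (.inl i) = (Pi.single i 1, 0) := by
  simp [adaptedBasis]

theorem adaptedBasis_inr (i : Fin n) : adaptedBasis n (.inr i) = (0, Pi.single i 1) := by
  simp [adaptedBasis]

theorem Jmap_adaptedBasis_inl (i : Fin n) :
    Jmap n (adaptedBasis n (.inl i)) = adaptedBasis n (.inr i) := by
  simp [adaptedBasis_inl, adaptedBasis_inr, Jmap]

theorem Jmap_adaptedBasis_inr (i : Fin n) : Jmap n (adaptedBasis n (.inr i)) = 0 := by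
  simp [adaptedBasis_inr, Jmap]

theorem dlt_succ_self (m : ℕ) : dlt (m + 1) (m + 1) = Pi.single (Fin.last m) 1 := by
  ext i
  simp [dlt, Pi.single_apply, Fin.ext_iff]

theorem Svec_eq (m : ℕ) : Svec (m + 1) = adaptedBasis (m + 1) (.inl (Fin.last m)) := by
  rw [adaptedBasis_inl, Svec, hvec, dlt_succ_self]

theorem Cvec_eq (m : ℕ) : Cvec (m + 1) = adaptedBasis (m + 1) (.inr (Fin.last m)) := by
  rw [adaptedBasis_inr, Cvec, vvec, dlt_succ_self]

end AdaptedBasis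

def sigma3P1 (n : ℕ) : Tri n →ₗ[ℝ] Bil n × Bil n where
  toFun A :=
    (((LinearMap.applyₗ (Svec n)).comp A).compl₂ (Jmap n) -
        A.compr₂ (LinearMap.applyₗ (Cvec n)),
      A.compr₂ (LinearMap.applyₗ (Cvec n)))
  map_add' A A' := by ext <;> simp <;> ring
  map_smul' c A := by ext <;> simp <;> ring

theorem mem_sigma3P1Image_iff {n : ℕ} {B : Bil n × Bil n} :
    B ∈ sigma3P1Image n ↔ ∃ A, IsSymmTrilinear A ∧ sigma3P1 n A = B := by
  constructor
  · rintro ⟨A, h₁₂, h₂₃, hS, hC⟩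
    refine ⟨A, ⟨h₁₂, h₂₃⟩,
      Prod.ext (LinearMap.ext₂ fun X Y => ?_) (LinearMap.ext₂ fun X Y => ?_)⟩
    · simp [sigma3P1, hS]
    · simp [sigma3P1, hC]
  · rintro ⟨A, ⟨h₁₂, h₂₃⟩, rfl⟩
    exact ⟨A, h₁₂, h₂₃, fun X Y => rfl, fun X Y => rfl⟩

theorem sigma3P1_eq_iff {m : ℕ} {A A' : Tri (m + 1)} :
    sigma3P1 (m + 1) A = sigma3P1 (m + 1) A' ↔
      (∀ u w, A (adaptedBasis (m + 1) u) (adaptedBasis (m + 1) w)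
          (adaptedBasis (m + 1) (.inr (Fin.last m))) =
        A' (adaptedBasis (m + 1) u) (adaptedBasis (m + 1) w)
          (adaptedBasis (m + 1) (.inr (Fin.last m)))) ∧
      ∀ u j, A (adaptedBasis (m + 1) u) (adaptedBasis (m + 1) (.inl (Fin.last m)))
          (adaptedBasis (m + 1) (.inr j)) =
        A' (adaptedBasis (m + 1) u) (adaptedBasis (m + 1) (.inl (Fin.last m)))
          (adaptedBasis (m + 1) (.inr j)) := by
  set b := adaptedBasis (m + 1)
  constructor
  · intro h
    refine ⟨fun u w => ?_, fun u j => ?_⟩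
    · simpa [sigma3P1, Cvec_eq] using congrArg (fun P => P.2 (b u) (b w)) h
    · simpa [sigma3P1, Svec_eq, Jmap_adaptedBasis_inl, b] using
        congrArg (fun P => (P.1 + P.2) (b u) (b (.inl j))) h
  · rintro ⟨hC, hS⟩
    refine Prod.ext (LinearMap.ext_basis b b fun u w => ?_) (LinearMap.ext_basis b b fun u w => ?_)
    · cases w <;>
        simp [sigma3P1, Svec_eq, Cvec_eq, Jmap_adaptedBasis_inl, Jmap_adaptedBasis_inr, hC, hS, b]
    · simp [sigma3P1, Cvec_eq, hC, b]

abbrev SupportIndex (m : ℕ) :=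
  Sym2 (Fin (m + 1) ⊕ Fin (m + 1)) ⊕ (Fin (m + 1) × Fin m ⊕ Sym2 (Fin m))

def verticalPair (m : ℕ) :
    Fin (m + 1) × Fin m ⊕ Sym2 (Fin m) → Sym2 (Fin (m + 1) ⊕ Fin (m + 1))
  | .inl (i, j) => s(.inl i, .inr j.castSucc)
  | .inr z => z.map (Sum.inr ∘ Fin.castSucc)

def supportEnum (m : ℕ) : SupportIndex m → Multiset (Fin (m + 1) ⊕ Fin (m + 1))
  | .inl z => .inr (Fin.last m) ::ₘ z.toMultiset
  | .inr p => .inl (Fin.last m) ::ₘ (verticalPair m p).toMultiset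

def sigma3P1Support (m : ℕ) : Set (Multiset (Fin (m + 1) ⊕ Fin (m + 1))) :=
  {s | (∃ u w, s = {u, w, .inr (Fin.last m)}) ∨ ∃ u j, s = {u, .inl (Fin.last m), .inr j}}

section SupportEnum

variable {m : ℕ}

theorem verticalPair_injective : Function.Injective (verticalPair m) := by
  rintro (⟨i, j⟩ | z) (⟨i', j'⟩ | z') h
  · simp_all [verticalPair]
  · induction z' with | h a b => simp [verticalPair] at h
  · induction z with | h a b => simp [verticalPair] at h
  · exact congrArg _ (Sym2.map.injective (Sum.inr_injective.comp (Fin.castSucc_injective m)) h)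

theorem last_notMem_verticalPair (p : Fin (m + 1) × Fin m ⊕ Sym2 (Fin m)) :
    .inr (Fin.last m) ∉ verticalPair m p := by
  rcases p with ⟨i, j⟩ | z
  · simp [verticalPair, (Fin.castSucc_ne_last _).symm]
  · induction z with | h a b =>
    simp [verticalPair, (Fin.castSucc_ne_last _).symm]

theorem supportEnum_injective : Function.Injective (supportEnum m) := by
  have hC : ∀ p, .inr (Fin.last m) ∉ supportEnum m (.inr p) := fun p => by
    simpa [supportEnum] using last_notMem_verticalPair p
  rintro (z | p) (z' | p') h
  · exact congrArg _ (Sym2.toMultiset_injective ((Multiset.cons_inj_right _).mp h))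
  · exact absurd (h ▸ Multiset.mem_cons_self _ _) (hC p')
  · exact absurd (h.symm ▸ Multiset.mem_cons_self _ _) (hC p)
  · exact congrArg _ (verticalPair_injective
      (Sym2.toMultiset_injective ((Multiset.cons_inj_right _).mp h)))

theorem range_supportEnum : Set.range (supportEnum m) = sigma3P1Support m := by
  ext s
  constructor
  · rintro ⟨⟨u, w⟩ | ⟨i, j⟩ | ⟨a, c⟩, rfl⟩
    · exact .inl ⟨u, w, by simp [supportEnum, ← Multiset.cons_zero, Multiset.cons_swap]⟩
    · exact .inr ⟨.inl i, j.castSucc,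
        by simp [supportEnum, verticalPair, ← Multiset.cons_zero, Multiset.cons_swap]⟩
    · exact .inr ⟨.inr a.castSucc, c.castSucc,
        by simp [supportEnum, verticalPair, ← Multiset.cons_zero, Multiset.cons_swap]⟩
  · rintro (⟨u, w, rfl⟩ | ⟨u, j, rfl⟩)
    · exact ⟨.inl s(u, w), by simp [supportEnum, ← Multiset.cons_zero, Multiset.cons_swap]⟩
    obtain ⟨j, rfl⟩ | rfl := Fin.eq_castSucc_or_eq_last j
    · obtain i | i := u
      · exact ⟨.inr (.inl (i, j)),
          by simp [supportEnum, verticalPair, ← Multiset.cons_zero, Multiset.cons_swap]⟩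
      obtain ⟨i, rfl⟩ | rfl := Fin.eq_castSucc_or_eq_last i
      · exact ⟨.inr (.inr s(i, j)),
          by simp [supportEnum, verticalPair, ← Multiset.cons_zero, Multiset.cons_swap]⟩
      · exact ⟨.inl s(.inl (Fin.last m), .inr j.castSucc), rfl⟩
    · exact ⟨.inl s(u, .inl (Fin.last m)),
        by simp [supportEnum, ← Multiset.cons_zero, Multiset.cons_swap]⟩

end SupportEnum

theorem card_supportIndex (m : ℕ) :
    Fintype.card (SupportIndex m) = (7 * (m + 1) ^ 2 - (m + 1)) / 2 := by
  have h₁ : (2 * m + 3).choose 2 * 2 = (2 * m + 3) * (2 * m + 2) := by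
    simpa using Nat.choose_succ_right_eq (2 * m + 3) 1
  have h₂ : (m + 1).choose 2 * 2 = (m + 1) * m := by
    simpa using Nat.choose_succ_right_eq (m + 1) 1
  simp only [Fintype.card_sum, Fintype.card_prod, Sym2.card, Fintype.card_fin,
    show m + 1 + (m + 1) + 1 = 2 * m + 3 by ring]
  refine (Nat.div_eq_of_eq_mul_left two_pos ?_).symm
  have : m + 1 ≤ 7 * (m + 1) ^ 2 := by nlinarith
  zify [this] at *
  linear_combination -h₁ - h₂

def supportForm {m : ℕ} (k : SupportIndex m) : Tri (m + 1) :=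
  (adaptedBasis (m + 1)).symMonomialDual (supportEnum m k)

section Span

variable {m : ℕ}

theorem supportForm_sum_apply_basis (g : SupportIndex m → ℝ)
    {x y z : Fin (m + 1) ⊕ Fin (m + 1)} {k : SupportIndex m} (h : {x, y, z} = supportEnum m k) :
    (∑ k, g k • supportForm k) (adaptedBasis (m + 1) x) (adaptedBasis (m + 1) y)
      (adaptedBasis (m + 1) z) = g k :=
  (adaptedBasis (m + 1)).sum_smul_symMonomialDual_apply_basis supportEnum_injective g h

theorem linearIndependent_sigma3P1_supportForm :
    LinearIndependent ℝ fun k : SupportIndex m => sigma3P1 (m + 1) (supportForm k) := by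
  rw [Fintype.linearIndependent_iffₛ]
  intro f g hfg k
  simp only [← map_smul, ← map_sum] at hfg
  obtain ⟨hC, hS⟩ := sigma3P1_eq_iff.mp hfg
  obtain ⟨u, w, hk⟩ | ⟨u, j, hk⟩ := range_supportEnum (m := m) ▸ Set.mem_range_self k
  · simpa only [supportForm_sum_apply_basis _ hk.symm] using hC u w
  · simpa only [supportForm_sum_apply_basis _ hk.symm] using hS u j

theorem sigma3P1Image_eq_span :
    sigma3P1Image (m + 1) =
      Submodule.span ℝ
        (Set.range fun k : SupportIndex m => sigma3P1 (m + 1) (supportForm k)) := by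
  set b := adaptedBasis (m + 1)
  refine le_antisymm (fun B hB => ?_) (Submodule.span_le.mpr ?_)
  · obtain ⟨A, hA, rfl⟩ := mem_sigma3P1Image_iff.mp hB
    have hrep : ∀ k, ∃ t : (Fin (m + 1) ⊕ Fin (m + 1)) × _ × _,
        supportEnum m k = {t.1, t.2.1, t.2.2} := fun k => by
      obtain ⟨u, w, hk⟩ | ⟨u, j, hk⟩ := range_supportEnum (m := m) ▸ Set.mem_range_self k
      exacts [⟨(u, w, _), hk⟩, ⟨(u, _, _), hk⟩]
    choose t ht using hrep
    set c := fun k => A (b (t k).1) (b (t k).2.1) (b (t k).2.2)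
    have hagree : ∀ x y z, {x, y, z} ∈ sigma3P1Support m →
        A (b x) (b y) (b z) = (∑ k, c k • supportForm k) (b x) (b y) (b z) := by
      intro x y z hs
      obtain ⟨k, hk⟩ := (range_supportEnum (m := m)).symm ▸ hs
      rw [supportForm_sum_apply_basis c hk.symm]
      refine hA.apply_eq_of_multiset_eq ?_
      simpa using congrArg (Multiset.map b) (hk.symm.trans (ht k))
    have hσ : sigma3P1 (m + 1) A = sigma3P1 (m + 1) (∑ k, c k • supportForm k) :=
      sigma3P1_eq_iff.mpr ⟨fun u w => hagree _ _ _ (.inl ⟨u, w, rfl⟩),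
        fun u j => hagree _ _ _ (.inr ⟨u, j, rfl⟩)⟩
    rw [hσ, map_sum]
    exact Submodule.sum_mem _ fun k _ => by
      rw [map_smul]
      exact Submodule.smul_mem _ _ (Submodule.subset_span ⟨k, rfl⟩)
  · rintro _ ⟨k, rfl⟩
    exact mem_sigma3P1Image_iff.mpr ⟨_, b.isSymmTrilinear_symMonomialDual _, rfl⟩

end Span

/-- the prolonged symbol `σ₃(P₁)` of the Rapcsák operator has rank
`(7n² − n)/2`. -/
theorem rank_sigma3P1 (n : ℕ) (hn : 1 ≤ n) :
    Module.finrank ℝ (sigma3P1Image n) = (7 * n ^ 2 - n) / 2 := by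
  obtain ⟨m, rfl⟩ : ∃ m, n = m + 1 := ⟨n - 1, by omega⟩
  rw [sigma3P1Image_eq_span, finrank_span_eq_card linearIndependent_sigma3P1_supportForm,
    card_supportIndex]
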